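/- For every integer r ≥ 2, there exists a proper edge colouring of the graph G_{4r,3(r−1)} which contains no rainbow copy of the cycle C_{4r} on 4r vertices. Consequently, the smallest d for which every proper edge colouring of G_{4r,d} yields a rainbow copy of C_{4r} is at least 3r−2. -/

import Mathlib

open SimpleGraph

/-- A proper edge colouring: edges sharing a vertex receive distinct colours. -/
def IsProperEdgeColoring {V α : Type*} (G : SimpleGraph V) (c : Sym2 V → α) : Prop :=
  ∀ e₁ ∈ G.edgeSet, ∀ e₂ ∈ G.edgeSet, e₁ ≠ e₂ → (∃ v, v ∈ e₁ ∧ v ∈ e₂) → c e₁ ≠ c e₂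

/-- The edge-coloured graph `(G, c)` contains a rainbow copy of `H`. -/
def HasRainbowCopy {V W α : Type*} (G : SimpleGraph V) (c : Sym2 V → α)
    (H : SimpleGraph W) : Prop :=
  ∃ f : W ↪ V, (∀ u v, H.Adj u v → G.Adj (f u) (f v)) ∧
    ∀ u v x y, H.Adj u v → H.Adj x y → s(u, v) ≠ s(x, y) →
      c s(f u, f v) ≠ c s(f x, f y)

/-- Every proper edge colouring of `G` yields a rainbow copy of `H`. -/
def ForcesRainbow {V W : Type*} (G : SimpleGraph V) (H : SimpleGraph W) : Prop :=
  ∀ c : Sym2 V → ℕ, IsProperEdgeColoring G c → HasRainbowCopy G c H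

/-- The maximum degree of `G` is at most `k`. -/
def MaxDegreeLE {V : Type*} (G : SimpleGraph V) (k : ℕ) : Prop :=
  ∀ v, (G.neighborSet v).ncard ≤ k

/-- `k` is the degree anti-Ramsey number of `H`: the smallest `k` for which some
graph with maximum degree at most `k` forces a rainbow copy of `H` under any
proper edge colouring. -/
def DegreeAntiRamsey {W : Type*} (H : SimpleGraph W) (k : ℕ) : Prop :=
  (∃ (n : ℕ) (G : SimpleGraph (Fin n)), MaxDegreeLE G k ∧ ForcesRainbow G H) ∧
  ∀ m : ℕ, (∃ (n : ℕ) (G : SimpleGraph (Fin n)), MaxDegreeLE G m ∧ ForcesRainbow G H) → k ≤ m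

/-- The simple graph generated by symmetrising a relation and removing loops. -/
def graphFromRel {V : Type*} (r : V → V → Prop) : SimpleGraph V where
  Adj a b := a ≠ b ∧ (r a b ∨ r b a)
  symm := ⟨fun a b ⟨hne, h⟩ => ⟨hne.symm, h.symm⟩⟩
  loopless := ⟨fun _ ⟨hne, _⟩ => hne rfl⟩

/-- The graph `G_{2k,d}`: vertices `u_i` (`i : Fin k`) and `v_{i,j}`
(`(i,j) : Fin k × Fin d`), with `v_{i,j}` adjacent to `u_i` and to `u_{i+1 (mod k)}`. -/
def GEven (k d : ℕ) : SimpleGraph (Fin k ⊕ Fin k × Fin d) :=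
  graphFromRel (fun a b =>
    match a, b with
    | Sum.inl a, Sum.inr (i, j) => (a : ℕ) = (i : ℕ) ∨ (a : ℕ) = ((i : ℕ) + 1) % k
    | _, _ => False)

/-!
Colour the edge `u_a v_{i,j}` by `6 ⌊j/3⌋ + 3 (i mod 2) + t`, with `t = j mod 3` if `a = i` and
`t = j + 1 mod 3` if `a = i + 1`. As `2r` is even, the two kinds of edges at `u_a` have indices
`i` of different parity, so the colouring is proper. Call `(⌊j/3⌋, i mod 2)` the palette of
`v_{i,j}`; for `d ≤ 3(r - 1)` there are at most `2(r - 1)` palettes. A copy of `C_{4r}` has at most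
`2r` vertices `u_a`, hence two distinct vertices `v_{i,j}`, `v_{i',j'}` with the same palette. Both
have degree two, so all four of their edges lie on the cycle, and their two colour pairs, being
2-subsets of the same three colours, meet: the copy is not rainbow.
-/

theorem isProperEdgeColoring_of_adj {V α : Type*} {G : SimpleGraph V} {c : Sym2 V → α}
    (h : ∀ v x y, G.Adj v x → G.Adj v y → x ≠ y → c s(v, x) ≠ c s(v, y)) :
    IsProperEdgeColoring G c := by
  rintro e₁ he₁ e₂ he₂ hne ⟨v, hv₁, hv₂⟩
  obtain ⟨x, rfl⟩ := Sym2.mem_iff_exists.mp hv₁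
  obtain ⟨y, rfl⟩ := Sym2.mem_iff_exists.mp hv₂
  exact h v x y he₁ he₂ (by rintro rfl; exact hne rfl)

theorem neighborSet_subset_image_of_ncard_le {V W : Type*} {G : SimpleGraph V}
    {H : SimpleGraph W} (f : W ↪ V) (hadj : ∀ u v, H.Adj u v → G.Adj (f u) (f v)) {w : W}
    (hfin : (G.neighborSet (f w)).Finite)
    (hcard : (G.neighborSet (f w)).ncard ≤ (H.neighborSet w).ncard) :
    G.neighborSet (f w) ⊆ f '' H.neighborSet w := by
  have himage : f '' H.neighborSet w ⊆ G.neighborSet (f w) := by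
    rintro _ ⟨x, hx, rfl⟩
    exact hadj w x hx
  rw [Set.eq_of_subset_of_ncard_le himage
    (by rwa [Set.ncard_image_of_injective _ f.injective]) hfin]

theorem ncard_neighborSet_cycleGraph {n : ℕ} (hn : 3 ≤ n) (v : Fin n) :
    ((cycleGraph n).neighborSet v).ncard = 2 := by
  obtain ⟨m, rfl⟩ := Nat.exists_eq_add_of_le' hn
  rw [cycleGraph_neighborSet, Set.ncard_pair]
  simp only [ne_eq, sub_eq_iff_eq_add, add_assoc v, left_eq_add]
  exact ne_of_beq_false rfl

theorem coe_finRotate_eq_mod {k : ℕ} (i : Fin k) : (finRotate k i : ℕ) = ((i : ℕ) + 1) % k := by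
  have := i.neZero
  rw [finRotate_apply, Fin.val_add, Fin.val_one', Nat.add_mod_mod]

theorem coe_finRotate_mod_two_ne {k : ℕ} (hk : Even k) (i : Fin k) :
    (finRotate k i : ℕ) % 2 ≠ (i : ℕ) % 2 := by
  rw [coe_finRotate_eq_mod, Nat.mod_mod_of_dvd _ hk.two_dvd]
  omega

theorem finRotate_ne_self_of_even {k : ℕ} (hk : Even k) (i : Fin k) : finRotate k i ≠ i :=
  fun h => coe_finRotate_mod_two_ne hk i (by rw [h])

namespace GEven

variable {k d : ℕ}

@[simp]
theorem adj_inl_inr_iff {a i : Fin k} {j : Fin d} :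
    (GEven k d).Adj (.inl a) (.inr (i, j)) ↔ a = i ∨ a = finRotate k i := by
  rw [Fin.ext_iff, Fin.ext_iff (b := finRotate k i), coe_finRotate_eq_mod]
  simp [GEven, graphFromRel]

@[simp]
theorem adj_inr_inl_iff {a i : Fin k} {j : Fin d} :
    (GEven k d).Adj (.inr (i, j)) (.inl a) ↔ a = i ∨ a = finRotate k i := by
  rw [adj_comm, adj_inl_inr_iff]

@[simp]
theorem not_adj_inl_inl {a b : Fin k} : ¬ (GEven k d).Adj (.inl a) (.inl b) := fun h => by
  rcases h.2 with h | h <;> exact h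

@[simp]
theorem not_adj_inr_inr {p q : Fin k × Fin d} : ¬ (GEven k d).Adj (.inr p) (.inr q) :=
  fun h => by rcases h.2 with h | h <;> exact h

theorem exists_eq_inr_of_adj_inl {a : Fin k} {x : Fin k ⊕ Fin k × Fin d}
    (h : (GEven k d).Adj (.inl a) x) : ∃ i j, x = .inr (i, j) := by
  rcases x with b | ⟨i, j⟩
  · exact absurd h not_adj_inl_inl
  · exact ⟨i, j, rfl⟩

theorem exists_eq_inl_of_adj_inr {p : Fin k × Fin d} {x : Fin k ⊕ Fin k × Fin d}
    (h : (GEven k d).Adj (.inr p) x) : ∃ a, x = .inl a := by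
  rcases x with a | q
  · exact ⟨a, rfl⟩
  · exact absurd h not_adj_inr_inr

theorem ncard_neighborSet_inr_le (i : Fin k) (j : Fin d) :
    ((GEven k d).neighborSet (.inr (i, j))).ncard ≤ 2 := by
  have hsub : (GEven k d).neighborSet (.inr (i, j)) ⊆ {.inl i, .inl (finRotate k i)} := by
    intro x h
    obtain ⟨a, rfl⟩ := exists_eq_inl_of_adj_inr h
    rcases adj_inr_inl_iff.mp h with rfl | rfl <;> simp
  calc _ ≤ ({.inl i, .inl (finRotate k i)} : Set (Fin k ⊕ Fin k × Fin d)).ncard :=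
        Set.ncard_le_ncard hsub
    _ ≤ 2 := (Set.ncard_insert_le _ _).trans (by rw [Set.ncard_singleton])

def colourOfPair : Fin k ⊕ Fin k × Fin d → Fin k ⊕ Fin k × Fin d → ℕ
  | .inl a, .inr (i, j) | .inr (i, j), .inl a =>
    6 * ((j : ℕ) / 3) + 3 * ((i : ℕ) % 2) + if a = i then (j : ℕ) % 3 else ((j : ℕ) % 3 + 1) % 3
  | _, _ => 0

def colouring (k d : ℕ) : Sym2 (Fin k ⊕ Fin k × Fin d) → ℕ :=
  Sym2.lift ⟨colourOfPair, by rintro (_ | ⟨_, _⟩) (_ | ⟨_, _⟩) <;> rfl⟩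

theorem colouring_inr_inl (a i : Fin k) (j : Fin d) :
    colouring k d s(.inr (i, j), .inl a) =
      6 * ((j : ℕ) / 3) + 3 * ((i : ℕ) % 2) + if a = i then (j : ℕ) % 3 else ((j : ℕ) % 3 + 1) % 3 :=
  rfl

theorem colouring_inl_inr (a i : Fin k) (j : Fin d) :
    colouring k d s(.inl a, .inr (i, j)) =
      6 * ((j : ℕ) / 3) + 3 * ((i : ℕ) % 2) + if a = i then (j : ℕ) % 3 else ((j : ℕ) % 3 + 1) % 3 :=
  rfl

theorem colouring_ne_at_inl (hk : Even k) {a i i' : Fin k} {j j' : Fin d}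
    (h : (GEven k d).Adj (.inl a) (.inr (i, j))) (h' : (GEven k d).Adj (.inl a) (.inr (i', j')))
    (hne : (i, j) ≠ (i', j')) :
    colouring k d s(.inl a, .inr (i, j)) ≠ colouring k d s(.inl a, .inr (i', j')) := by
  have hrot := finRotate_ne_self_of_even hk
  rw [adj_inl_inr_iff] at h h'
  rw [colouring_inl_inr, colouring_inl_inr]
  rcases h with rfl | rfl <;> rcases h' with rfl | h'
  · have : (j : ℕ) ≠ j' := fun hj => hne (by rw [Fin.ext hj])
    rw [if_pos rfl, if_pos rfl]
    omega
  · have hpar := coe_finRotate_mod_two_ne hk i'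
    rw [← h'] at hpar
    rw [if_pos rfl, if_neg (by rw [h']; exact hrot i')]
    omega
  · have hpar := coe_finRotate_mod_two_ne hk i
    rw [if_neg (hrot i), if_pos rfl]
    omega
  · obtain rfl := (finRotate k).injective h'
    have : (j : ℕ) ≠ j' := fun hj => hne (by rw [Fin.ext hj])
    rw [if_neg (hrot i), if_neg (hrot i)]
    omega

theorem colouring_ne_at_inr (hk : Even k) {a b i : Fin k} {j : Fin d}
    (ha : (GEven k d).Adj (.inr (i, j)) (.inl a)) (hb : (GEven k d).Adj (.inr (i, j)) (.inl b))
    (hab : a ≠ b) :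
    colouring k d s(.inr (i, j), .inl a) ≠ colouring k d s(.inr (i, j), .inl b) := by
  have hrot := finRotate_ne_self_of_even hk i
  rw [adj_inr_inl_iff] at ha hb
  rw [colouring_inr_inl, colouring_inr_inl]
  rcases ha with rfl | rfl <;> rcases hb with rfl | rfl
  · exact absurd rfl hab
  · rw [if_pos rfl, if_neg hrot]
    omega
  · rw [if_neg hrot, if_pos rfl]
    omega
  · exact absurd rfl hab

theorem isProperEdgeColoring_colouring (hk : Even k) :
    IsProperEdgeColoring (GEven k d) (colouring k d) := by
  refine isProperEdgeColoring_of_adj ?_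
  rintro (a | ⟨i, j⟩) x y hx hy hxy
  · obtain ⟨i₁, j₁, rfl⟩ := exists_eq_inr_of_adj_inl hx
    obtain ⟨i₂, j₂, rfl⟩ := exists_eq_inr_of_adj_inl hy
    exact colouring_ne_at_inl hk hx hy (fun h => hxy (by rw [h]))
  · obtain ⟨a, rfl⟩ := exists_eq_inl_of_adj_inr hx
    obtain ⟨b, rfl⟩ := exists_eq_inl_of_adj_inr hy
    exact colouring_ne_at_inr hk hx hy (fun h => hxy (by rw [h]))

theorem exists_colouring_eq (hk : Even k) {i i' : Fin k} {j j' : Fin d}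
    (hi : (i : ℕ) % 2 = i' % 2) (hj : (j : ℕ) / 3 = j' / 3) :
    ∃ a a', (GEven k d).Adj (.inr (i, j)) (.inl a) ∧ (GEven k d).Adj (.inr (i', j')) (.inl a') ∧
      colouring k d s(.inr (i, j), .inl a) = colouring k d s(.inr (i', j'), .inl a') := by
  have hrot := finRotate_ne_self_of_even hk
  simp only [colouring_inr_inl]
  by_cases h₁ : (j : ℕ) % 3 = j' % 3
  · refine ⟨i, i', adj_inr_inl_iff.mpr (.inl rfl), adj_inr_inl_iff.mpr (.inl rfl), ?_⟩
    rw [if_pos rfl, if_pos rfl]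
    omega
  by_cases h₂ : ((j : ℕ) % 3 + 1) % 3 = j' % 3
  · refine ⟨finRotate k i, i', adj_inr_inl_iff.mpr (.inr rfl), adj_inr_inl_iff.mpr (.inl rfl), ?_⟩
    rw [if_neg (hrot i), if_pos rfl]
    omega
  · refine ⟨i, finRotate k i', adj_inr_inl_iff.mpr (.inl rfl), adj_inr_inl_iff.mpr (.inr rfl), ?_⟩
    rw [if_pos rfl, if_neg (hrot i')]
    omega

/-- Key for the pigeonhole step: injective on the `u_a`, and equal on two `v`'s exactly when
their palettes agree. -/
def paletteKey : Fin k ⊕ Fin k × Fin d → ℕ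
  | .inl a => a
  | .inr (i, j) => k + 2 * ((j : ℕ) / 3) + (i : ℕ) % 2

theorem not_hasRainbowCopy_cycleGraph {r : ℕ} (hr : 0 < r) (hd : d ≤ 3 * (r - 1)) :
    ¬ HasRainbowCopy (GEven (2 * r) d) (colouring (2 * r) d) (cycleGraph (4 * r)) := by
  rintro ⟨f, hadj, hrb⟩
  have hcover : ∀ w i j a, f w = .inr (i, j) → (GEven (2 * r) d).Adj (.inr (i, j)) (.inl a) →
      ∃ x, (cycleGraph (4 * r)).Adj w x ∧ f x = .inl a := by
    intro w i j a hw ha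
    refine neighborSet_subset_image_of_ncard_le f hadj (Set.toFinite _) ?_ (hw ▸ ha)
    rw [ncard_neighborSet_cycleGraph (by omega), hw]
    exact ncard_neighborSet_inr_le i j
  obtain ⟨w, -, w', -, hne, hkey⟩ := Finset.exists_ne_map_eq_of_card_lt_of_maps_to
    (s := Finset.univ) (t := Finset.range (4 * r - 2)) (f := paletteKey ∘ f)
    (by simp only [Finset.card_range, Finset.card_univ, Fintype.card_fin]; omega) (by
      intro w _
      simp only [Finset.coe_range, Set.mem_Iio, Function.comp_apply]
      rcases f w with a | ⟨i, j⟩ <;> simp only [paletteKey] <;> omega)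
  rcases hw : f w with a | ⟨i, j⟩ <;> rcases hw' : f w' with a' | ⟨i', j'⟩ <;>
    simp only [Function.comp_apply, hw, hw', paletteKey] at hkey
  · exact hne (f.injective (by rw [hw, hw', Fin.ext hkey]))
  · omega
  · omega
  have hi : (i : ℕ) % 2 = i' % 2 := by omega
  have hj : (j : ℕ) / 3 = j' / 3 := by omega
  obtain ⟨a, a', ha, ha', hcol⟩ := exists_colouring_eq (even_two_mul r) hi hj
  obtain ⟨x, hx, hfx⟩ := hcover w i j a hw ha
  obtain ⟨x', hx', hfx'⟩ := hcover w' i' j' a' hw' ha'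
  refine hrb w x w' x' hx hx' ?_ (by rw [hw, hfx, hw', hfx']; exact hcol)
  rw [Ne, Sym2.eq_iff]
  rintro (⟨rfl, -⟩ | ⟨rfl, -⟩)
  · exact hne rfl
  · exact Sum.inr_ne_inl (hw.symm.trans hfx')

end GEven

theorem stmt_15 (r : ℕ) (hr : 2 ≤ r) :
    (∃ c : Sym2 (Fin (2 * r) ⊕ Fin (2 * r) × Fin (3 * (r - 1))) → ℕ,
      IsProperEdgeColoring (GEven (2 * r) (3 * (r - 1))) c ∧
      ¬ HasRainbowCopy (GEven (2 * r) (3 * (r - 1))) c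
        (SimpleGraph.cycleGraph (4 * r))) ∧
    ∀ d : ℕ, ForcesRainbow (GEven (2 * r) d) (SimpleGraph.cycleGraph (4 * r)) →
      3 * r - 2 ≤ d := by
  have hproper := fun d => GEven.isProperEdgeColoring_colouring (d := d) (even_two_mul r)
  refine ⟨⟨_, hproper _, GEven.not_hasRainbowCopy_cycleGraph (by omega) le_rfl⟩, fun d hforce => ?_⟩
  by_contra! hlt
  exact GEven.not_hasRainbowCopy_cycleGraph (by omega) (by omega) (hforce _ (hproper d))
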